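/- For all z ∈ C with |Re z| < 1/2 (so that all arguments avoid nonpositive integers), G(1+z)²·G(1−z)² / (G(1+2z)·G(1−2z)) = 2^{−4z²}·cos(πz) · G(1/2)⁴ / (G(1/2+z)²·G(1/2−z)²). -/

import Mathlib

/-!
Write `G(1 + w) = exp L(w)` with `L(w) = α w + β w² + ∑ₙ gₙ(w)`, where `gₙ` is the
logarithm of the `n`-th Weierstrass factor. The combination
`2L(z) + 2L(-z) + 2L(z - ½) + 2L(-z - ½) - L(2z) - L(-2z) - 4L(-½)`
annihilates `α w + β w²`, so only the series survive. Termwise, with `k = n + 1` and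
`F(k) = (1 - 4z²/k²)^k`, the exponential of the combination is the rational function
`(1 - 4z²/(2k - 1)²) F(2k - 1) F(2k) / F(k)`, so the partial products telescope to
`∏_{n<N} (1 - 4z²/(2n + 1)²) · ∏_{N<k≤2N} F(k)`. The first factor tends to `cos πz` by
Euler's sine product taken at `z` and at `2z`; the second tends to `2^{-4z²}` because
`k log(1 - a/k²) = -a/k + O(k⁻³)` and `∑_{N<k≤2N} 1/k → log 2`.
-/

open Real Complex

/-- The Barnes G-function, defined by its Weierstrass product:
`G(x+1) = (2π)^{x/2} exp((ψ(1)x² − x(x+1))/2) ∏_{n≥1} (1+x/n)^n exp(−x + x²/(2n))`,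
where `ψ(1) = −γ`. -/
noncomputable def BarnesG (z : ℂ) : ℂ :=
  ((2 * Real.pi : ℝ) : ℂ) ^ ((z - 1) / 2) *
    Complex.exp ((-(Real.eulerMascheroniConstant : ℂ) * (z - 1) ^ 2 - (z - 1) * z) / 2) *
    ∏' n : ℕ, ((1 + (z - 1) / ((n : ℂ) + 1)) ^ (n + 1) *
      Complex.exp (-(z - 1) + (z - 1) ^ 2 / (2 * ((n : ℂ) + 1))))

open Filter Finset Topology Asymptotics

lemma Complex.summable_mul_log_one_add_sub_logTaylor (m : ℕ) {c u : ℕ → ℂ}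
    (hu : Tendsto u atTop (𝓝 0)) (hs : Summable fun n ↦ ‖c n * u n ^ (m + 1)‖) :
    Summable fun n ↦ c n * (log (1 + u n) - logTaylor (m + 1) (u n)) :=
  summable_of_isBigO_nat hs <| isBigO_norm_right.mpr <|
    (isBigO_refl c atTop).mul ((log_sub_logTaylor_isBigO m).comp_tendsto hu)

lemma one_add_div_natCast_add_one_ne_zero {w : ℂ} (hw : -1 < w.re) (n : ℕ) :
    1 + w / ((n : ℂ) + 1) ≠ 0 := by
  have hn : (0 : ℝ) < n + 1 := by positivity
  have hre : 0 < (1 + w / ((n : ℂ) + 1)).re := by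
    rw [show (n : ℂ) + 1 = ((n + 1 : ℝ) : ℂ) by push_cast; rfl, add_re, one_re, div_ofReal_re]
    have : -1 < w.re / (n + 1) := by
      rw [lt_div_iff₀ hn]
      linarith [n.cast_nonneg (α := ℝ)]
    linarith
  exact fun h ↦ hre.ne' (by rw [h, zero_re])

noncomputable def barnesLogTerm (w : ℂ) (n : ℕ) : ℂ :=
  ((n : ℂ) + 1) * log (1 + w / ((n : ℂ) + 1)) + (-w + w ^ 2 / (2 * ((n : ℂ) + 1)))

lemma summable_barnesLogTerm (w : ℂ) : Summable (barnesLogTerm w) := by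
  have hu : Tendsto (fun n : ℕ ↦ w / ((n : ℂ) + 1)) atTop (𝓝 0) := by
    simpa [div_eq_mul_inv] using tendsto_one_div_add_atTop_nhds_zero_nat.const_mul w
  refine (summable_mul_log_one_add_sub_logTaylor 2 (c := fun n ↦ (n : ℂ) + 1) hu ?_).congr
    fun n ↦ ?_
  · refine (summable_pow_div_add (w ^ 3) 2 1 one_lt_two).congr fun n ↦ ?_
    have := Nat.cast_add_one_ne_zero (R := ℂ) n
    push_cast
    congr 1
    field_simp
  · have := Nat.cast_add_one_ne_zero (R := ℂ) n
    have hTaylor (x : ℂ) : logTaylor (2 + 1) x = x - x ^ 2 / 2 := by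
      simp [logTaylor_succ, logTaylor_zero]
      ring
    rw [barnesLogTerm, hTaylor]
    field_simp
    ring

lemma exp_barnesLogTerm {w : ℂ} (hw : -1 < w.re) (n : ℕ) :
    cexp (barnesLogTerm w n) =
      (1 + w / ((n : ℂ) + 1)) ^ (n + 1) * cexp (-w + w ^ 2 / (2 * ((n : ℂ) + 1))) := by
  rw [barnesLogTerm, Complex.exp_add, ← exp_log (one_add_div_natCast_add_one_ne_zero hw n),
    ← Complex.exp_nat_mul, exp_log (one_add_div_natCast_add_one_ne_zero hw n)]
  push_cast
  rfl

noncomputable def barnesExponent (w : ℂ) : ℂ :=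
  (Complex.log ((2 * π : ℝ) : ℂ) - 1) / 2 * w +
    (-(eulerMascheroniConstant : ℂ) - 1) / 2 * w ^ 2 + ∑' n, barnesLogTerm w n

lemma barnesG_one_add {w : ℂ} (hw : -1 < w.re) : BarnesG (1 + w) = cexp (barnesExponent w) := by
  have hprod : HasProd (fun n : ℕ ↦ (1 + w / ((n : ℂ) + 1)) ^ (n + 1) *
      cexp (-w + w ^ 2 / (2 * ((n : ℂ) + 1)))) (cexp (∑' n, barnesLogTerm w n)) :=
    (summable_barnesLogTerm w).hasSum.cexp.congr_fun fun n ↦ (exp_barnesLogTerm hw n).symm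
  have h2π : ((2 * π : ℝ) : ℂ) ≠ 0 := ofReal_ne_zero.mpr (by positivity)
  rw [BarnesG, add_sub_cancel_left, hprod.tprod_eq, cpow_def_of_ne_zero h2π, ← Complex.exp_add,
    ← Complex.exp_add, barnesExponent]
  congr 1
  ring

/-- For `F w = log G(1 + w)`, `exp (duplicationDefect F z)` is the left side of the theorem
multiplied by `G(1/2 + z)² G(1/2 - z)² / G(1/2)⁴`. -/
noncomputable def duplicationDefect (F : ℂ → ℂ) (z : ℂ) : ℂ :=
  2 * F z + 2 * F (-z) + 2 * F (z - 1 / 2) + 2 * F (-z - 1 / 2) -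
    F (2 * z) - F (-2 * z) - 4 * F (-1 / 2)

lemma duplicationDefect_add (F G : ℂ → ℂ) (z : ℂ) :
    duplicationDefect (fun w ↦ F w + G w) z = duplicationDefect F z + duplicationDefect G z := by
  simp only [duplicationDefect]
  ring

lemma duplicationDefect_const_mul (c : ℂ) (F : ℂ → ℂ) (z : ℂ) :
    duplicationDefect (fun w ↦ c * F w) z = c * duplicationDefect F z := by
  simp only [duplicationDefect]
  ring

lemma duplicationDefect_linear_add_sq (α β z : ℂ) :
    duplicationDefect (fun w ↦ α * w + β * w ^ 2) z = 0 := by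
  simp only [duplicationDefect]
  ring

lemma exp_duplicationDefect (F : ℂ → ℂ) (z : ℂ) :
    cexp (duplicationDefect F z) =
      cexp (F z) ^ 2 * cexp (F (-z)) ^ 2 * cexp (F (z - 1 / 2)) ^ 2 * cexp (F (-z - 1 / 2)) ^ 2 /
        (cexp (F (2 * z)) * cexp (F (-2 * z)) * cexp (F (-1 / 2)) ^ 4) := by
  rw [eq_div_iff (by simp [Complex.exp_ne_zero])]
  simp only [← Complex.exp_nat_mul, ← Complex.exp_add, duplicationDefect]
  congr 1
  push_cast
  ring

lemma HasSum.duplicationDefect {F : ℕ → ℂ → ℂ} {T : ℂ → ℂ}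
    (h : ∀ w, HasSum (fun n ↦ F n w) (T w)) (z : ℂ) :
    HasSum (fun n ↦ duplicationDefect (F n) z) (duplicationDefect T z) :=
  (((((((h z).mul_left 2).add ((h _).mul_left 2)).add ((h _).mul_left 2)).add
    ((h _).mul_left 2)).sub (h _)).sub (h _)).sub ((h _).mul_left 4)

lemma hasSum_duplicationDefect_barnesLogTerm (z : ℂ) :
    HasSum (fun n ↦ duplicationDefect (barnesLogTerm · n) z)
      (duplicationDefect barnesExponent z) := by
  have h := HasSum.duplicationDefect (fun w ↦ (summable_barnesLogTerm w).hasSum) z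
  rwa [← zero_add (duplicationDefect _ z), ← duplicationDefect_linear_add_sq,
    ← duplicationDefect_add] at h

lemma one_sub_four_mul_sq_div_sq_ne_zero {z : ℂ} (hz : |z.re| < 1 / 2) (n : ℕ) :
    1 - 4 * z ^ 2 / ((n + 1 : ℕ) : ℂ) ^ 2 ≠ 0 := by
  obtain ⟨hz₁, hz₂⟩ := abs_lt.mp hz
  have hk : (n : ℂ) + 1 ≠ 0 := Nat.cast_add_one_ne_zero n
  have hplus := one_add_div_natCast_add_one_ne_zero (w := 2 * z) (by norm_num; linarith) n
  have hminus := one_add_div_natCast_add_one_ne_zero (w := -2 * z) (by norm_num; linarith) n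
  convert mul_ne_zero hplus hminus using 1
  push_cast
  field_simp
  ring

lemma duplicationDefect_barnesLogTerm (z : ℂ) (n : ℕ) :
    duplicationDefect (barnesLogTerm · n) z =
      ((n + 1 : ℕ) : ℂ) * duplicationDefect (fun w ↦ log (1 + w / ((n : ℂ) + 1))) z := by
  have : (barnesLogTerm · n) = fun w ↦ ((n : ℂ) + 1) * log (1 + w / ((n : ℂ) + 1)) +
      (-1 * w + (2 * ((n : ℂ) + 1))⁻¹ * w ^ 2) := by
    funext w
    rw [barnesLogTerm]
    ring
  rw [this, duplicationDefect_add, duplicationDefect_linear_add_sq, add_zero,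
    duplicationDefect_const_mul, Nat.cast_succ]

lemma exp_duplicationDefect_log_one_add_div {z : ℂ} (hz : |z.re| < 1 / 2) (n : ℕ) :
    cexp (duplicationDefect (fun w ↦ log (1 + w / ((n : ℂ) + 1))) z) =
      (1 - 4 * z ^ 2 / ((2 * n + 2 : ℕ) : ℂ) ^ 2) ^ 2 *
        (1 - 4 * z ^ 2 / ((2 * n + 1 : ℕ) : ℂ) ^ 2) ^ 2 /
        (1 - 4 * z ^ 2 / ((n + 1 : ℕ) : ℂ) ^ 2) := by
  have hZ₀ := one_sub_four_mul_sq_div_sq_ne_zero hz n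
  set k : ℂ := (n : ℂ) + 1
  have hk : k ≠ 0 := Nat.cast_add_one_ne_zero n
  have hk_succ : ((n + 1 : ℕ) : ℂ) = k := Nat.cast_succ n
  have hk_odd : ((2 * n + 1 : ℕ) : ℂ) = 2 * k - 1 := by push_cast; ring
  have hk_even : ((2 * n + 2 : ℕ) : ℂ) = 2 * k := by push_cast; ring
  have hk' : 2 * k - 1 ≠ 0 := hk_odd ▸ Nat.cast_ne_zero.mpr (by omega)
  rw [hk_succ] at hZ₀
  rw [hk_succ, hk_odd, hk_even]
  obtain ⟨hz₁, hz₂⟩ := abs_lt.mp hz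
  have ha {w : ℂ} (hw : -1 < w.re) : 1 + w / k ≠ 0 := one_add_div_natCast_add_one_ne_zero hw n
  have hX : (1 + z / k) * (1 + -z / k) = 1 - 4 * z ^ 2 / (2 * k) ^ 2 := by
    field_simp
    ring
  have hY : (1 + (z - 1 / 2) / k) * (1 + (-z - 1 / 2) / k) =
      (1 - 4 * z ^ 2 / (2 * k - 1) ^ 2) * (1 + -1 / 2 / k) ^ 2 := by
    field_simp
    ring
  have hZ : (1 + 2 * z / k) * (1 + -2 * z / k) = 1 - 4 * z ^ 2 / k ^ 2 := by
    field_simp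
    ring
  have hden : (1 + 2 * z / k) * (1 + -2 * z / k) * (1 + -1 / 2 / k) ^ 4 ≠ 0 :=
    mul_ne_zero (hZ ▸ hZ₀) (pow_ne_zero _ (ha (by norm_num)))
  rw [exp_duplicationDefect, exp_log (ha (by linarith)), exp_log (ha (by rw [neg_re]; linarith)),
    exp_log (ha (by norm_num; linarith)), exp_log (ha (by norm_num; linarith)),
    exp_log (ha (by norm_num; linarith)), exp_log (ha (by norm_num; linarith)),
    exp_log (ha (by norm_num)), div_eq_div_iff hden hZ₀, ← hX, ← hZ]
  calc _ = ((1 + z / k) * (1 + -z / k)) ^ 2 * ((1 + (z - 1 / 2) / k) * (1 + (-z - 1 / 2) / k)) ^ 2 *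
        ((1 + 2 * z / k) * (1 + -2 * z / k)) := by
        ring
    _ = _ := by rw [hY]; ring

lemma exp_duplicationDefect_barnesLogTerm {z : ℂ} (hz : |z.re| < 1 / 2) (n : ℕ) :
    cexp (duplicationDefect (barnesLogTerm · n) z) *
        (1 - 4 * z ^ 2 / ((n + 1 : ℕ) : ℂ) ^ 2) ^ (n + 1) =
      (1 - 4 * z ^ 2 / ((2 * n + 1 : ℕ) : ℂ) ^ 2) *
        (1 - 4 * z ^ 2 / ((2 * n + 1 : ℕ) : ℂ) ^ 2) ^ (2 * n + 1) *
        (1 - 4 * z ^ 2 / ((2 * n + 2 : ℕ) : ℂ) ^ 2) ^ (2 * n + 2) := by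
  rw [duplicationDefect_barnesLogTerm, Complex.exp_nat_mul,
    exp_duplicationDefect_log_one_add_div hz, div_pow,
    div_mul_cancel₀ _ (pow_ne_zero _ (one_sub_four_mul_sq_div_sq_ne_zero hz n))]
  generalize 1 - 4 * z ^ 2 / ((2 * n + 2 : ℕ) : ℂ) ^ 2 = X
  generalize 1 - 4 * z ^ 2 / ((2 * n + 1 : ℕ) : ℂ) ^ 2 = Y
  ring

lemma prod_range_eq_mul_prod_Ico_of_mul_eq {K : Type*} [CommRing K] [IsDomain K] {x y F : ℕ → K}
    (hF : ∀ n, F (n + 1) ≠ 0) (h : ∀ n, x n * F (n + 1) = y n * F (2 * n + 1) * F (2 * n + 2))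
    (N : ℕ) :
    ∏ n ∈ range N, x n = (∏ n ∈ range N, y n) * ∏ k ∈ Ico (N + 1) (2 * N + 1), F k := by
  induction N with
  | zero => simp
  | succ N ih =>
    have hbot : ∏ k ∈ Ico (N + 1) (2 * (N + 1) + 1), F k =
        F (N + 1) * ∏ k ∈ Ico (N + 1 + 1) (2 * (N + 1) + 1), F k :=
      prod_eq_prod_Ico_succ_bot (by omega) F
    have htop : ∏ k ∈ Ico (N + 1) (2 * (N + 1) + 1), F k =
        (∏ k ∈ Ico (N + 1) (2 * N + 1), F k) * F (2 * N + 1) * F (2 * N + 2) := by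
      rw [show 2 * (N + 1) + 1 = 2 * N + 1 + 1 + 1 by ring, prod_Ico_succ_top (by omega),
        prod_Ico_succ_top (by omega)]
    apply mul_right_cancel₀ (hF N)
    calc (∏ n ∈ range (N + 1), x n) * F (N + 1)
        = (∏ n ∈ range N, x n) * (x N * F (N + 1)) := by rw [prod_range_succ, mul_assoc]
      _ = (∏ n ∈ range (N + 1), y n) * ∏ k ∈ Ico (N + 1) (2 * (N + 1) + 1), F k := by
        rw [ih, h, prod_range_succ, htop]; ring
      _ = _ := by rw [hbot]; ring

lemma prod_range_two_mul_one_sub_sq_div_sq (z : ℂ) (N : ℕ) :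
    ∏ j ∈ range (2 * N), (1 - (2 * z) ^ 2 / ((j : ℂ) + 1) ^ 2) =
      (∏ n ∈ range N, (1 - 4 * z ^ 2 / ((2 * n + 1 : ℕ) : ℂ) ^ 2)) *
        ∏ j ∈ range N, (1 - z ^ 2 / ((j : ℂ) + 1) ^ 2) := by
  induction N with
  | zero => simp
  | succ N ih =>
    have hodd : 1 - (2 * z) ^ 2 / (((2 * N : ℕ) : ℂ) + 1) ^ 2 =
        1 - 4 * z ^ 2 / ((2 * N + 1 : ℕ) : ℂ) ^ 2 := by
      push_cast
      ring
    have heven : 1 - (2 * z) ^ 2 / (((2 * N + 1 : ℕ) : ℂ) + 1) ^ 2 =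
        1 - z ^ 2 / ((N : ℂ) + 1) ^ 2 := by
      have hN : (N : ℂ) + 1 ≠ 0 := Nat.cast_add_one_ne_zero N
      rw [show ((2 * N + 1 : ℕ) : ℂ) + 1 = 2 * ((N : ℂ) + 1) by push_cast; ring]
      field_simp
    rw [show 2 * (N + 1) = 2 * N + 1 + 1 by ring, prod_range_succ, prod_range_succ, ih, hodd,
      heven, prod_range_succ, prod_range_succ]
    ring

lemma tendsto_prod_range_one_sub_four_mul_sq_div_odd_sq {z : ℂ}
    (hz : ∀ m : ℤ, (m : ℂ) = z → m = 0) :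
    Tendsto (fun N ↦ ∏ n ∈ range N, (1 - 4 * z ^ 2 / ((2 * n + 1 : ℕ) : ℂ) ^ 2)) atTop
      (𝓝 (Complex.cos (π * z))) := by
  rcases eq_or_ne z 0 with rfl | hz0
  · simp
  have hsin : Complex.sin (π * z) ≠ 0 := by
    rw [Ne, Complex.sin_eq_zero_iff]
    rintro ⟨m, hm⟩
    have hmz : (m : ℂ) = z :=
      mul_left_cancel₀ (ofReal_ne_zero.mpr pi_ne_zero) (hm.trans (mul_comm _ _)).symm
    exact hz0 (by rw [← hmz, hz m hmz, Int.cast_zero])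
  have htwo : Tendsto (fun N : ℕ ↦ 2 * N) atTop atTop :=
    tendsto_atTop_mono (fun N ↦ by simp only [id]; omega) tendsto_id
  -- `cos πz = sin 2πz / (2 sin πz)`, and the even-indexed factors of the sine product at `2z`
  -- are the factors of the sine product at `z`.
  have hsin_z := (tendsto_euler_sin_prod z).const_mul 2
  have hquot :=
    ((tendsto_euler_sin_prod (2 * z)).comp htwo).div hsin_z (mul_ne_zero two_ne_zero hsin)
  rw [show π * (2 * z) = 2 * (π * z) by ring, Complex.sin_two_mul, mul_assoc,
    mul_div_mul_left _ _ two_ne_zero, mul_div_cancel_left₀ _ hsin] at hquot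
  refine hquot.congr' ?_
  filter_upwards [hsin_z.eventually_ne (mul_ne_zero two_ne_zero hsin)] with N hN
  rw [Pi.div_apply, Function.comp_apply, div_eq_iff hN, prod_range_two_mul_one_sub_sq_div_sq]
  ring

lemma tendsto_sum_Ico_of_summable {E : Type*} [AddCommGroup E] [TopologicalSpace E]
    [IsTopologicalAddGroup E] {f : ℕ → E} (hf : Summable f) :
    Tendsto (fun N ↦ ∑ k ∈ Ico (N + 1) (2 * N + 1), f k) atTop (𝓝 0) := by
  have h := hf.hasSum.tendsto_sum_nat
  have hodd : Tendsto (fun N : ℕ ↦ 2 * N + 1) atTop atTop :=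
    tendsto_atTop_mono (fun N ↦ by simp only [id]; omega) tendsto_id
  have hwin := (h.comp hodd).sub (h.comp (tendsto_add_atTop_nat 1))
  rw [sub_self] at hwin
  exact hwin.congr fun N ↦ (sum_Ico_eq_sub _ (by omega)).symm

lemma tendsto_sum_Ico_inv_natCast :
    Tendsto (fun N : ℕ ↦ ∑ k ∈ Ico (N + 1) (2 * N + 1), (k : ℝ)⁻¹) atTop
      (𝓝 (Real.log 2)) := by
  have hwin (N : ℕ) (hN : N ≠ 0) : ∑ k ∈ Ico (N + 1) (2 * N + 1), (k : ℝ)⁻¹ =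
      ((harmonic (2 * N) : ℝ) - Real.log ((2 * N : ℕ) : ℝ)) -
        ((harmonic N : ℝ) - Real.log (N : ℝ)) + Real.log 2 := by
    have hlog : Real.log ((2 * N : ℕ) : ℝ) = Real.log 2 + Real.log N := by
      push_cast
      exact Real.log_mul two_ne_zero (Nat.cast_ne_zero.mpr hN)
    rw [hlog, harmonic, harmonic, ← sum_Ico_add' _ N (2 * N) 1]
    push_cast
    rw [range_eq_Ico, range_eq_Ico,
      ← sum_Ico_consecutive _ (Nat.zero_le N) (by omega : N ≤ 2 * N)]
    ring
  have hγ := Real.tendsto_harmonic_sub_log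
  have hlim := ((hγ.comp (tendsto_id.const_mul_atTop' two_pos)).sub hγ).add_const (Real.log 2)
  rw [sub_self, zero_add] at hlim
  refine hlim.congr' ?_
  filter_upwards [eventually_ne_atTop 0] with N hN
  exact (hwin N hN).symm

lemma one_sub_div_natCast_sq_ne_zero {a : ℂ} {k : ℕ} (hk : ‖a‖ < k) :
    1 - a / (k : ℂ) ^ 2 ≠ 0 := by
  have hk₀ : k ≠ 0 := by
    rintro rfl
    exact (norm_nonneg a).not_gt (by exact_mod_cast hk)
  have hk₁ : (1 : ℝ) ≤ k := by exact_mod_cast Nat.one_le_iff_ne_zero.mpr hk₀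
  intro h
  rw [sub_eq_zero, eq_div_iff (by simpa using hk₀), one_mul] at h
  have : ‖a‖ = (k : ℝ) ^ 2 := by rw [← h, norm_pow, Complex.norm_natCast]
  nlinarith

lemma tendsto_prod_Ico_one_sub_div_sq_pow (a : ℂ) :
    Tendsto (fun N : ℕ ↦ ∏ k ∈ Ico (N + 1) (2 * N + 1), (1 - a / (k : ℂ) ^ 2) ^ k) atTop
      (𝓝 (2 ^ (-a))) := by
  -- `r k = k log(1 - a/k²) + a/k = O(k⁻³)`
  set r : ℕ → ℂ := fun k ↦
    k * (Complex.log (1 + -a / (k : ℂ) ^ 2) - logTaylor (1 + 1) (-a / (k : ℂ) ^ 2)) with hr_def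
  have hr : Summable r := by
    refine summable_mul_log_one_add_sub_logTaylor 1 ?_ ?_
    · simpa [div_eq_mul_inv, inv_pow] using
        ((tendsto_inv_atTop_nhds_zero_nat (𝕜 := ℂ)).pow 2).const_mul (-a)
    · refine (summable_pow_div_add (a ^ 2) 3 0 (by norm_num)).congr fun k ↦ ?_
      rcases eq_or_ne (k : ℂ) 0 with hk | hk
      · simp [hk]
      · push_cast
        rw [add_zero]
        congr 1
        field_simp
  have hterm (k : ℕ) :
      (k : ℂ) * Complex.log (1 - a / (k : ℂ) ^ 2) = -a * ((k : ℝ)⁻¹ : ℝ) + r k := by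
    rcases eq_or_ne (k : ℂ) 0 with hk | hk
    · simp [r, hk]
    · have hTaylor : logTaylor (1 + 1) (-a / (k : ℂ) ^ 2) = -a / (k : ℂ) ^ 2 := by
        simp [logTaylor_succ, logTaylor_zero]
      rw [hr_def]
      dsimp only
      rw [hTaylor, neg_div, ← sub_eq_add_neg]
      push_cast
      field_simp
      ring
  have hsum : Tendsto
      (fun N : ℕ ↦
        ∑ k ∈ Ico (N + 1) (2 * N + 1), (k : ℂ) * Complex.log (1 - a / (k : ℂ) ^ 2))
      atTop (𝓝 (-a * (Real.log 2 : ℂ) + 0)) := by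
    have hharm := (continuous_ofReal.tendsto _).comp tendsto_sum_Ico_inv_natCast
    refine ((hharm.const_mul (-a)).add (tendsto_sum_Ico_of_summable hr)).congr fun N ↦ ?_
    simp only [hterm, sum_add_distrib, ← mul_sum, Function.comp_apply, ofReal_sum]
  have h2 : (2 : ℂ) ^ (-a) = cexp (-a * (Real.log 2 : ℂ) + 0) := by
    rw [cpow_def_of_ne_zero two_ne_zero, add_zero, mul_comm, ofReal_log zero_le_two, ofReal_ofNat]
  rw [h2]
  refine ((Complex.continuous_exp.tendsto _).comp hsum).congr' ?_
  filter_upwards [eventually_ge_atTop ⌈‖a‖⌉₊] with N hN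
  rw [Function.comp_apply, Complex.exp_sum]
  refine prod_congr rfl fun k hk ↦ ?_
  have hak : ‖a‖ < k :=
    (Nat.le_ceil _).trans_lt (by exact_mod_cast hN.trans_lt (mem_Ico.mp hk).1)
  rw [Complex.exp_nat_mul, exp_log (one_sub_div_natCast_sq_ne_zero hak)]

lemma exp_duplicationDefect_barnesExponent {z : ℂ} (hz : |z.re| < 1 / 2) :
    cexp (duplicationDefect barnesExponent z) = 2 ^ (-4 * z ^ 2) * Complex.cos (π * z) := by
  have hnotInt (m : ℤ) (hm : (m : ℂ) = z) : m = 0 := by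
    have : |(m : ℝ)| < 1 := by
      rw [← hm, intCast_re] at hz
      linarith
    exact Int.abs_lt_one_iff.mp (by exact_mod_cast this)
  have hlim := (tendsto_prod_range_one_sub_four_mul_sq_div_odd_sq hnotInt).mul
    (tendsto_prod_Ico_one_sub_div_sq_pow (4 * z ^ 2))
  rw [neg_mul, mul_comm]
  refine tendsto_nhds_unique ?_ hlim
  refine (hasSum_duplicationDefect_barnesLogTerm z).cexp.tendsto_prod_nat.congr fun N ↦ ?_
  exact prod_range_eq_mul_prod_Ico_of_mul_eq
    (fun n ↦ pow_ne_zero _ (one_sub_four_mul_sq_div_sq_ne_zero hz n))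
    (exp_duplicationDefect_barnesLogTerm hz) N

/-- Barnes-function identity equivalent to the duplication formula, used in the
partial proof of the conjecture for the Macdonald-kernel constant. -/
theorem barnes_duplication_identity (z : ℂ) (hz : |z.re| < 1 / 2) :
    BarnesG (1 + z) ^ 2 * BarnesG (1 - z) ^ 2 / (BarnesG (1 + 2 * z) * BarnesG (1 - 2 * z)) =
      (2 : ℂ) ^ (-4 * z ^ 2) * Complex.cos (Real.pi * z) *
        BarnesG (1 / 2) ^ 4 / (BarnesG (1 / 2 + z) ^ 2 * BarnesG (1 / 2 - z) ^ 2) := by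
  obtain ⟨hz₁, hz₂⟩ := abs_lt.mp hz
  have hhalf : BarnesG (1 / 2) = cexp (barnesExponent (-1 / 2)) := by
    rw [← barnesG_one_add (by norm_num)]
    norm_num
  rw [hhalf, barnesG_one_add (by linarith), show 1 - z = 1 + -z by ring,
    barnesG_one_add (by rw [neg_re]; linarith), barnesG_one_add (by norm_num; linarith),
    show 1 - 2 * z = 1 + -2 * z by ring, barnesG_one_add (by norm_num; linarith),
    show 1 / 2 + z = 1 + (z - 1 / 2) by ring, barnesG_one_add (by norm_num; linarith),
    show 1 / 2 - z = 1 + (-z - 1 / 2) by ring, barnesG_one_add (by norm_num; linarith),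
    ← exp_duplicationDefect_barnesExponent hz, exp_duplicationDefect]
  field_simp
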